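/- arXiv:2202.04729 — 2 statements merged into one kernel-verified Lean document; each statement's English description precedes it below -/
import Mathlib

section
/- Let n ∈ ℕ and (κ,k) ∈ L_n. If f belongs to C^1_{-1,(κ)}(0,∞), i.e. f = I_{(κ)} φ = κ*φ for some φ ∈ C_{-1}(0,∞), then the general fractional derivative is also a right inverse of the general fractional integral on f: (I_{(κ)} D_{(k)} f)(t) = f(t) for all t > 0. -/
noncomputable section

/-- Laplace convolution `(f*g)(t) = ∫_0^t f(t-τ) g(τ) dτ`. -/
def conv (f g : ℝ → ℝ) : ℝ → ℝ := fun t => ∫ τ in (0:ℝ)..t, f (t - τ) * g τ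

/-- The space `C_{-1}(0,∞)`: functions of the form `t^q f₁(t)` with `q > -1`,
`f₁` continuous on `[0,∞)`. -/
def Cm1 (f : ℝ → ℝ) : Prop :=
  ∃ q : ℝ, -1 < q ∧ ∃ f₁ : ℝ → ℝ, ContinuousOn f₁ (Set.Ici 0) ∧
    ∀ t : ℝ, 0 < t → f t = t ^ q * f₁ t

/-- The subspace `C_{-1,0}(0,∞)`: as above with `-1 < q < 0`. -/
def Cm10 (f : ℝ → ℝ) : Prop :=
  ∃ q : ℝ, -1 < q ∧ q < 0 ∧ ∃ f₁ : ℝ → ℝ, ContinuousOn f₁ (Set.Ici 0) ∧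
    ∀ t : ℝ, 0 < t → f t = t ^ q * f₁ t

/-- `h_p(t) = t^(p-1)/Γ(p)`. -/
def hker (p : ℝ) : ℝ → ℝ := fun t => t ^ (p - 1) / Real.Gamma p

/-- The Sonine kernel class `L_n`: `κ ∈ C_{-1}`, `k ∈ C_{-1,0}`, and
`(κ*k)(t) = h_n(t)` for all `t > 0`. -/
def SonineL (n : ℕ) (κ k : ℝ → ℝ) : Prop :=
  Cm1 κ ∧ Cm10 k ∧ ∀ t : ℝ, 0 < t → conv κ k t = hker n t

/-- The general fractional integral `(I_{(κ)} f)(t) = (κ*f)(t)`. -/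
def GFI (κ f : ℝ → ℝ) : ℝ → ℝ := conv κ f

/-- The general fractional derivative of Riemann–Liouville type
`(D_{(k)} f)(t) = (d^n/dt^n)(k*f)(t)`. -/
def GFD (n : ℕ) (k f : ℝ → ℝ) : ℝ → ℝ := iteratedDeriv n (conv k f)

/-!
Write `φ(t) = t^q φ₁(t)`. Extended by zero to `t ≤ 0`, the functions `κ`, `k`, `φ` are
measurable and `O(t^q)` with `q > -1` on every `(0, T]`, and this class is closed under
convolution: the Beta integral `∫₀ˣ t^α (x - t)^β dt = x^(α+β+1) ∫₀¹ u^α (1 - u)^β du` bounds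
the convolution. This is exactly the integrability Fubini needs, so Laplace convolution is
associative on `C_{-1}` and `k * f = k * (κ * φ) = (k * κ) * φ = h_n * φ`. Since
`h_1 * h_m = h_(m+1)`, associativity also gives Cauchy's formula: `h_n * φ` is the `n`-fold
primitive of `φ`. As `φ` is continuous on `(0, ∞)`, differentiating `n` times there gives
`D_(k) f = φ`, hence `I_(κ) D_(k) f = κ * φ = f`.
-/

open MeasureTheory Set Filter
open scoped Convolution
open ContinuousLinearMap (mul)

theorem intervalIntegrable_rpow_mul_one_sub_rpow {α β : ℝ} (hα : -1 < α) (hβ : -1 < β) :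
    IntervalIntegrable (fun u : ℝ => u ^ α * (1 - u) ^ β) volume 0 1 := by
  have hB := (Complex.betaIntegral_convergent (u := α + 1) (v := β + 1)
    (by simp only [Complex.add_re, Complex.ofReal_re, Complex.one_re]; linarith)
    (by simp only [Complex.add_re, Complex.ofReal_re, Complex.one_re]; linarith))
  rw [intervalIntegrable_iff_integrableOn_Ioc_of_le zero_le_one] at hB ⊢
  refine IntegrableOn.congr_fun hB.re (fun u hu => ?_) measurableSet_Ioc
  simp only [add_sub_cancel_right]
  rw [← Complex.ofReal_one, ← Complex.ofReal_sub, ← Complex.ofReal_cpow hu.1.le,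
    ← Complex.ofReal_cpow (sub_nonneg.2 hu.2), ← Complex.ofReal_mul]
  rfl

theorem integral_rpow_mul_sub_rpow (α β : ℝ) {x : ℝ} (hx : 0 < x) :
    ∫ t in (0 : ℝ)..x, t ^ α * (x - t) ^ β
      = x ^ (α + β + 1) * ∫ u in (0 : ℝ)..1, u ^ α * (1 - u) ^ β := by
  have hscale : ∀ u ∈ uIcc (0 : ℝ) 1,
      (x * u) ^ α * (x - x * u) ^ β = x ^ (α + β) * (u ^ α * (1 - u) ^ β) := by
    intro u hu
    rw [uIcc_of_le zero_le_one] at hu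
    rw [← mul_one_sub, Real.mul_rpow hx.le hu.1, Real.mul_rpow hx.le (sub_nonneg.2 hu.2),
      Real.rpow_add hx]
    ring
  have h := intervalIntegral.integral_comp_mul_left (a := 0) (b := 1)
    (fun t => t ^ α * (x - t) ^ β) hx.ne'
  rw [intervalIntegral.integral_congr hscale, intervalIntegral.integral_const_mul, mul_zero,
    mul_one, smul_eq_mul] at h
  rw [Real.rpow_add_one hx.ne', mul_right_comm, h]
  field_simp

theorem integrableOn_rpow_mul_sub_rpow {α β : ℝ} (hα : -1 < α) (hβ : -1 < β) {x : ℝ}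
    (hx : 0 < x) :
    IntegrableOn (fun t : ℝ => t ^ α * (x - t) ^ β) (Ioo 0 x) := by
  have h := ((intervalIntegrable_rpow_mul_one_sub_rpow hα hβ).comp_mul_left
    (c := x⁻¹)).const_mul (x ^ (α + β))
  rw [zero_div, one_div, inv_inv, intervalIntegrable_iff_integrableOn_Ioo_of_le hx.le] at h
  refine h.congr_fun (fun t ht => ?_) measurableSet_Ioo
  have hx' : 0 ≤ x⁻¹ := inv_nonneg.2 hx.le
  change x ^ (α + β) * ((x⁻¹ * t) ^ α * (1 - x⁻¹ * t) ^ β) = _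
  rw [show 1 - x⁻¹ * t = x⁻¹ * (x - t) by field_simp, Real.mul_rpow hx' ht.1.le,
    Real.mul_rpow hx' (sub_nonneg.2 ht.2.le), Real.inv_rpow hx.le, Real.inv_rpow hx.le,
    Real.rpow_add hx]
  field_simp

/-- Zero extensions of `C_{-1}` functions, keeping only what the convolution estimates use:
measurability and a bound `O(x ^ q)` on every `(0, T]`. -/
structure CausalCm1 (q : ℝ) (f : ℝ → ℝ) : Prop where
  neg_one_lt : -1 < q
  measurable : Measurable f
  eq_zero_of_nonpos : ∀ x ≤ 0, f x = 0
  exists_norm_le : ∀ T, ∃ M, ∀ x ∈ Ioc 0 T, ‖f x‖ ≤ M * x ^ q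

namespace CausalCm1

variable {α β γ q : ℝ} {f g h : ℝ → ℝ}

theorem norm (hf : CausalCm1 q f) : CausalCm1 q (fun x => ‖f x‖) where
  neg_one_lt := hf.neg_one_lt
  measurable := hf.measurable.norm
  eq_zero_of_nonpos x hx := by simp [hf.eq_zero_of_nonpos x hx]
  exists_norm_le := by simpa only [norm_norm] using hf.exists_norm_le

theorem integrableOn_Ioo (hf : CausalCm1 q f) {T : ℝ} (hT : 0 < T) :
    IntegrableOn f (Ioo 0 T) := by
  obtain ⟨M, hM⟩ := hf.exists_norm_le T
  refine (((intervalIntegral.integrableOn_Ioo_rpow_iff hT).2 hf.neg_one_lt).const_mul M).mono'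
    hf.measurable.aestronglyMeasurable ?_
  filter_upwards [ae_restrict_mem measurableSet_Ioo] with x hx
  exact hM x (Ioo_subset_Ioc_self hx)

theorem intervalIntegrable (hf : CausalCm1 q f) (a b : ℝ) :
    IntervalIntegrable f volume a b := by
  set T := max (max a b) 0 + 1
  have hT : 0 < T := by positivity
  have hneg : IntegrableOn f (Iic 0) :=
    integrableOn_zero.congr_fun (fun x hx => (hf.eq_zero_of_nonpos x hx).symm) measurableSet_Iic
  refine intervalIntegrable_iff.2 ((hneg.union (hf.integrableOn_Ioo hT)).mono_set fun x hx => ?_)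
  rcases le_or_gt x 0 with h | h
  · exact Or.inl h
  · exact Or.inr ⟨h, (hx.2.trans (le_max_left _ 0)).trans_lt (lt_add_one _)⟩

theorem support_mul_sub_subset (hf : CausalCm1 α f) (hg : CausalCm1 β g) (x : ℝ) :
    Function.support (fun t => f t * g (x - t)) ⊆ Ioo 0 x := by
  intro t ht
  by_contra hmem
  rcases not_and_or.1 hmem with h0 | hx
  · exact ht (by simp [hf.eq_zero_of_nonpos t (not_lt.1 h0)])
  · exact ht (by simp [hg.eq_zero_of_nonpos (x - t) (by linarith [not_lt.1 hx])])

theorem exists_norm_mul_sub_le (hf : CausalCm1 α f) (hg : CausalCm1 β g) (T : ℝ) :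
    ∃ M, ∀ x ≤ T, ∀ t ∈ Ioo 0 x,
      ‖f t * g (x - t)‖ ≤ M * (t ^ α * (x - t) ^ β) := by
  obtain ⟨Mf, hMf⟩ := hf.exists_norm_le T
  obtain ⟨Mg, hMg⟩ := hg.exists_norm_le T
  refine ⟨Mf * Mg, fun x hxT t ht => ?_⟩
  have hft := hMf t ⟨ht.1, by linarith [ht.2]⟩
  have hgt := hMg (x - t) ⟨by linarith [ht.2], by linarith [ht.1]⟩
  calc ‖f t * g (x - t)‖ = ‖f t‖ * ‖g (x - t)‖ := norm_mul _ _
    _ ≤ (Mf * t ^ α) * (Mg * (x - t) ^ β) :=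
        mul_le_mul hft hgt (norm_nonneg _) ((norm_nonneg _).trans hft)
    _ = Mf * Mg * (t ^ α * (x - t) ^ β) := by ring

theorem integrableOn_mul_sub (hf : CausalCm1 α f) (hg : CausalCm1 β g) (x : ℝ) :
    IntegrableOn (fun t => f t * g (x - t)) (Ioo 0 x) := by
  rcases le_or_gt x 0 with hx | hx
  · simp [Ioo_eq_empty_of_le hx]
  obtain ⟨M, hM⟩ := hf.exists_norm_mul_sub_le hg x
  have hmeas : Measurable fun t => f t * g (x - t) :=
    hf.measurable.mul (hg.measurable.comp (measurable_const.sub measurable_id))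
  refine ((integrableOn_rpow_mul_sub_rpow hf.neg_one_lt hg.neg_one_lt hx).const_mul M).mono'
    hmeas.aestronglyMeasurable ?_
  filter_upwards [ae_restrict_mem measurableSet_Ioo] with t ht
  exact hM x le_rfl t ht

theorem convolutionExistsAt (hf : CausalCm1 α f) (hg : CausalCm1 β g) (x : ℝ) :
    ConvolutionExistsAt f g x (mul ℝ ℝ) := by
  simpa [ConvolutionExistsAt] using
    (integrableOn_iff_integrable_of_support_subset (hf.support_mul_sub_subset hg x)).1
      (hf.integrableOn_mul_sub hg x)

theorem convolution_eq_setIntegral (hf : CausalCm1 α f) (hg : CausalCm1 β g) (x : ℝ) :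
    (f ⋆[mul ℝ ℝ] g) x = ∫ t in Ioo 0 x, f t * g (x - t) := by
  rw [convolution_def, setIntegral_eq_integral_of_forall_compl_eq_zero]
  · simp
  · intro t ht
    simpa using Function.notMem_support.1 (fun h => ht (hf.support_mul_sub_subset hg x h))

theorem convolution (hf : CausalCm1 α f) (hg : CausalCm1 β g) :
    CausalCm1 (α + β + 1) (f ⋆[mul ℝ ℝ] g) where
  neg_one_lt := by linarith [hf.neg_one_lt, hg.neg_one_lt]
  measurable := by
    have hint : StronglyMeasurable (Function.uncurry fun x t => f t * g (x - t)) :=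
      ((hf.measurable.comp measurable_snd).mul
        (hg.measurable.comp (measurable_fst.sub measurable_snd))).stronglyMeasurable
    convert (hint.integral_prod_right (ν := volume)).measurable using 1
    ext x
    simp [convolution_def]
  eq_zero_of_nonpos x hx := by
    rw [hf.convolution_eq_setIntegral hg, Ioo_eq_empty_of_le hx, Measure.restrict_empty,
      integral_zero_measure]
  exists_norm_le T := by
    obtain ⟨M, hM⟩ := hf.exists_norm_mul_sub_le hg T
    refine ⟨M * ∫ u in (0 : ℝ)..1, u ^ α * (1 - u) ^ β, fun x hx => ?_⟩
    rw [hf.convolution_eq_setIntegral hg]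
    calc ‖∫ t in Ioo 0 x, f t * g (x - t)‖
        ≤ ∫ t in Ioo 0 x, M * (t ^ α * (x - t) ^ β) :=
          norm_integral_le_of_norm_le
            ((integrableOn_rpow_mul_sub_rpow hf.neg_one_lt hg.neg_one_lt hx.1).const_mul M)
            ((ae_restrict_mem measurableSet_Ioo).mono fun t ht => hM x hx.2 t ht)
      _ = _ := by
        rw [integral_const_mul, ← integral_Ioc_eq_integral_Ioo,
          ← intervalIntegral.integral_of_le hx.1.le, integral_rpow_mul_sub_rpow α β hx.1]
        ring

theorem convolution_assoc (hf : CausalCm1 α f) (hg : CausalCm1 β g) (hh : CausalCm1 γ h) :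
    (f ⋆[mul ℝ ℝ] g) ⋆[mul ℝ ℝ] h = f ⋆[mul ℝ ℝ] (g ⋆[mul ℝ ℝ] h) := by
  ext x
  exact MeasureTheory.convolution_assoc (mul ℝ ℝ) (mul ℝ ℝ) (mul ℝ ℝ) (mul ℝ ℝ)
    (fun a b c => mul_assoc a b c) hf.measurable.aestronglyMeasurable
    hg.measurable.aestronglyMeasurable hh.measurable.aestronglyMeasurable
    (Eventually.of_forall (hf.convolutionExistsAt hg))
    (Eventually.of_forall (hg.norm.convolutionExistsAt hh.norm))
    (hf.norm.convolutionExistsAt (hg.norm.convolution hh.norm) x)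

end CausalCm1

theorem Cm10.cm1 {f : ℝ → ℝ} (hf : Cm10 f) : Cm1 f :=
  let ⟨q, hq, _, f₁, hf₁, hf⟩ := hf
  ⟨q, hq, f₁, hf₁, hf⟩

theorem cm1_hker {p : ℝ} (hp : 0 < p) : Cm1 (hker p) :=
  ⟨p - 1, by linarith, fun _ => (Real.Gamma p)⁻¹, continuousOn_const,
    fun _ _ => div_eq_mul_inv _ _⟩

theorem Cm1.continuousOn {f : ℝ → ℝ} (hf : Cm1 f) : ContinuousOn f (Ioi 0) := by
  obtain ⟨q, -, f₁, hf₁, hf⟩ := hf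
  refine ContinuousOn.congr (fun x hx => ?_) fun x hx => hf x hx
  exact ((Real.continuousAt_rpow_const x q (Or.inl (ne_of_gt hx))).continuousWithinAt).mul
    (hf₁.mono Ioi_subset_Ici_self x hx)

theorem Cm1.causalCm1_indicator {f : ℝ → ℝ} (hf : Cm1 f) :
    ∃ q, CausalCm1 q ((Ioi 0).indicator f) := by
  have hcont := hf.continuousOn
  obtain ⟨q, hq, f₁, hf₁, hf⟩ := hf
  refine ⟨q, hq, ?_, fun x hx => indicator_of_notMem (not_lt.2 hx) f, fun T => ?_⟩
  · classical
    rw [← piecewise_eq_indicator]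
    exact hcont.measurable_piecewise continuousOn_const measurableSet_Ioi
  · obtain ⟨M, hM⟩ := (isCompact_Icc (a := 0) (b := T)).exists_bound_of_continuousOn
      (hf₁.mono Icc_subset_Ici_self)
    refine ⟨M, fun x hx => ?_⟩
    have hxq : 0 ≤ x ^ q := Real.rpow_nonneg hx.1.le q
    rw [indicator_of_mem (mem_Ioi.2 hx.1), hf x hx.1, norm_mul, Real.norm_of_nonneg hxq, mul_comm]
    exact mul_le_mul_of_nonneg_right (hM x (Ioc_subset_Icc_self hx)) hxq

theorem indicator_conv (a b : ℝ → ℝ) :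
    (Ioi 0).indicator (conv a b) = (Ioi 0).indicator b ⋆[mul ℝ ℝ] (Ioi 0).indicator a := by
  rw [← posConvolution_eq_convolution_indicator b a (mul ℝ ℝ) volume, posConvolution]
  refine indicator_congr fun x _ => intervalIntegral.integral_congr fun τ _ => ?_
  simp [mul_comm]

theorem conv_congr {a a' b b' : ℝ → ℝ} (ha : EqOn a a' (Ioi 0)) (hb : EqOn b b' (Ioi 0)) :
    EqOn (conv a b) (conv a' b') (Ioi 0) := fun t ht => by
  have h := congrFun (indicator_conv a b) t
  rw [indicator_congr ha, indicator_congr hb, ← indicator_conv, indicator_of_mem ht,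
    indicator_of_mem ht] at h
  exact h

theorem conv_comm (a b : ℝ → ℝ) : conv a b = conv b a := by
  ext t
  have h := intervalIntegral.integral_comp_sub_left (a := 0) (b := t)
    (fun τ => a (t - τ) * b τ) t
  simp only [sub_sub_cancel, sub_self, sub_zero] at h
  rw [conv, ← h, conv]
  simp only [mul_comm]

theorem conv_assoc {a b c : ℝ → ℝ} (ha : Cm1 a) (hb : Cm1 b) (hc : Cm1 c) :
    EqOn (conv a (conv b c)) (conv (conv a b) c) (Ioi 0) := fun t ht => by
  obtain ⟨_, ha⟩ := ha.causalCm1_indicator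
  obtain ⟨_, hb⟩ := hb.causalCm1_indicator
  obtain ⟨_, hc⟩ := hc.causalCm1_indicator
  have h := congrFun (hc.convolution_assoc hb ha) t
  rw [← indicator_conv, ← indicator_conv, ← indicator_conv, ← indicator_conv,
    indicator_of_mem ht, indicator_of_mem ht] at h
  exact h

def primitive (g : ℝ → ℝ) : ℝ → ℝ := fun x => ∫ τ in (0 : ℝ)..x, g τ

section Primitive

variable {g : ℝ → ℝ}

theorem continuous_primitive (hg : ∀ a b, IntervalIntegrable g volume a b) :
    Continuous (primitive g) :=
  intervalIntegral.continuous_primitive hg 0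

theorem intervalIntegrable_iterate_primitive (hg : ∀ a b, IntervalIntegrable g volume a b)
    (m : ℕ) (a b : ℝ) : IntervalIntegrable (primitive^[m] g) volume a b := by
  induction m generalizing a b with
  | zero => exact hg a b
  | succ m ih =>
    rw [Function.iterate_succ_apply']
    exact (continuous_primitive ih).intervalIntegrable a b

theorem continuousOn_iterate_primitive (hg : ∀ a b, IntervalIntegrable g volume a b)
    {s : Set ℝ} (hc : ContinuousOn g s) : ∀ m, ContinuousOn (primitive^[m] g) s
  | 0 => hc
  | m + 1 => by
    rw [Function.iterate_succ_apply']
    exact (continuous_primitive (intervalIntegrable_iterate_primitive hg m)).continuousOn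

theorem deriv_primitive (hg : ∀ a b, IntervalIntegrable g volume a b) {s : Set ℝ}
    (hs : IsOpen s) (hc : ContinuousOn g s) : EqOn (deriv (primitive g)) g s := fun x hx =>
  (intervalIntegral.integral_hasDerivAt_right (hg 0 x)
    (hc.stronglyMeasurableAtFilter hs x hx) (hc.continuousAt (hs.mem_nhds hx))).deriv

theorem iteratedDeriv_iterate_primitive (hg : ∀ a b, IntervalIntegrable g volume a b)
    {s : Set ℝ} (hs : IsOpen s) (hc : ContinuousOn g s) (m : ℕ) :
    EqOn (iteratedDeriv m (primitive^[m] g)) g s := by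
  induction m with
  | zero => exact eqOn_refl _ _
  | succ m ih =>
    have hderiv : EqOn (deriv (primitive^[m + 1] g)) (primitive^[m] g) s := by
      rw [Function.iterate_succ_apply']
      exact deriv_primitive (intervalIntegrable_iterate_primitive hg m) hs
        (continuousOn_iterate_primitive hg hc m)
    rw [iteratedDeriv_succ']
    exact (hderiv.iteratedDeriv_of_isOpen hs m).trans ih

end Primitive

theorem conv_hker_one (g : ℝ → ℝ) : conv (hker 1) g = primitive g := by
  ext x
  simp [conv, primitive, hker]

theorem conv_hker_one_hker {p : ℝ} (hp : 0 < p) :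
    EqOn (conv (hker 1) (hker p)) (hker (p + 1)) (Ioi 0) := fun x _ => by
  rw [conv_hker_one, primitive]
  simp only [hker]
  rw [intervalIntegral.integral_div, integral_rpow (Or.inl (by linarith)),
    Real.zero_rpow (by linarith), Real.Gamma_add_one hp.ne', sub_add_cancel, add_sub_cancel_right]
  field_simp
  ring

theorem conv_hker_eq_iterate_primitive {g : ℝ → ℝ} (hg : Cm1 g) {m : ℕ} (hm : 0 < m) :
    EqOn (conv (hker m) g) (primitive^[m] ((Ioi 0).indicator g)) (Ioi 0) := by
  have hg_ind : EqOn g ((Ioi 0).indicator g) (Ioi 0) := fun x hx => (indicator_of_mem hx g).symm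
  induction m with
  | zero => exact absurd hm (lt_irrefl 0)
  | succ m ih =>
    rcases Nat.eq_zero_or_pos m with rfl | hm
    · simpa [conv_hker_one] using conv_congr (eqOn_refl (hker 1) (Ioi 0)) hg_ind
    intro s hs
    have hm' : (0 : ℝ) < m := Nat.cast_pos.2 hm
    calc conv (hker (m + 1 : ℕ)) g s = conv (conv (hker 1) (hker m)) g s :=
          conv_congr (fun x hx => by push_cast; exact (conv_hker_one_hker hm' hx).symm)
            (eqOn_refl _ _) hs
      _ = conv (hker 1) (conv (hker m) g) s :=
          (conv_assoc (cm1_hker one_pos) (cm1_hker hm') hg hs).symm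
      _ = primitive (primitive^[m] ((Ioi 0).indicator g)) s := by
          rw [← conv_hker_one]; exact conv_congr (eqOn_refl _ _) (ih hm) hs
      _ = _ := (congrFun (Function.iterate_succ_apply' primitive m _) s).symm

/-- the GFD is a right inverse of the GFI on
`C^1_{-1,(κ)}(0,∞) = I_{(κ)}(C_{-1}(0,∞))`. -/
theorem GFD_right_inverse_GFI (n : ℕ) (hn : 0 < n) (κ k : ℝ → ℝ)
    (hκk : SonineL n κ k) (f φ : ℝ → ℝ) (hφ : Cm1 φ)
    (hf : ∀ t : ℝ, 0 < t → f t = GFI κ φ t) :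
    ∀ t : ℝ, 0 < t → GFI κ (GFD n k f) t = f t := by
  obtain ⟨hκ, hk, hκk⟩ := hκk
  obtain ⟨q, hΦ⟩ := hφ.causalCm1_indicator
  have hφ_ind : EqOn φ ((Ioi 0).indicator φ) (Ioi 0) := fun x hx => (indicator_of_mem hx φ).symm
  have hkf : EqOn (conv k f) (primitive^[n] ((Ioi 0).indicator φ)) (Ioi 0) := fun s hs =>
    calc conv k f s = conv k (conv κ φ) s := conv_congr (eqOn_refl _ _) hf hs
      _ = conv (conv k κ) φ s := conv_assoc hk.cm1 hκ hφ hs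
      _ = conv (hker n) φ s :=
          conv_congr (fun x hx => (congrFun (conv_comm k κ) x).trans (hκk x hx))
            (eqOn_refl _ _) hs
      _ = _ := conv_hker_eq_iterate_primitive hφ hn hs
  have hGFD : EqOn (GFD n k f) φ (Ioi 0) :=
    ((hkf.iteratedDeriv_of_isOpen isOpen_Ioi n).trans
      (iteratedDeriv_iterate_primitive hΦ.intervalIntegrable isOpen_Ioi
        (hφ.continuousOn.congr hφ_ind.symm) n)).trans hφ_ind.symm
  intro t ht
  rw [hf t ht]
  exact conv_congr (eqOn_refl _ _) hGFD ht
end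
end

section
/- Let n ∈ ℕ and f ∈ C_{-1}(0,∞). Then the function g(t) = ({1}^{<n>} * f)(t) = (h_n * f)(t) = ∫_0^t (t−τ)^{n-1}/(n−1)! f(τ) dτ belongs to C^{n-1}([0,∞)) (it extends to an (n−1)-times continuously differentiable function on [0,∞)), and g(0) = g'(0) = ⋯ = g^{(n-1)}(0) = 0. -/
noncomputable section

/-!
Write `H_m f (t) = ∫₀ᵗ (t - τ)^m f(τ) dτ`, so that `h_{m+1} * f = H_m f / m!`. Splitting
`(t - τ)^{m+1} = t (t - τ)^m - τ (t - τ)^m` gives `H_{m+1} f = t · H_m f - H_m (τ f)`, and since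
`C_{-1}` is stable under multiplication by `τ`, an induction over all `f ∈ C_{-1}` at once yields
`(H_{m+1} f)' = (m + 1) H_m f` on `(0, ∞)`, starting from the fundamental theorem of calculus for
`H_0 f = ∫₀ᵗ f`. Each `H_m f` is continuous on `[0, ∞)`, so these derivatives extend to the endpoint
`0`, and `H_m f (0) = 0` because the integral is over an empty interval.
-/

open Set MeasureTheory intervalIntegral Filter Topology
open scoped Nat

theorem hasDerivWithinAt_Ici_of_hasDerivAt_Ioi {F F' : ℝ → ℝ} {a x : ℝ}
    (hF : ContinuousOn F (Ici a)) (hF' : ContinuousOn F' (Ici a))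
    (hd : ∀ y, a < y → HasDerivAt F (F' y) y) (hx : a ≤ x) :
    HasDerivWithinAt F (F' x) (Ici a) x := by
  rcases hx.lt_or_eq with hx | rfl
  · exact (hd x hx).hasDerivWithinAt
  · refine hasDerivWithinAt_Ici_of_tendsto_deriv (s := Ioi a)
      (fun y hy => (hd y hy).differentiableAt.differentiableWithinAt)
      ((hF a self_mem_Ici).mono Ioi_subset_Ici_self) self_mem_nhdsWithin ?_
    exact ((hF' a self_mem_Ici).mono Ioi_subset_Ici_self).tendsto.congr'
      (eventually_nhdsWithin_of_forall fun y hy => (hd y hy).deriv.symm)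

section DerivativeChain

variable {s : Set ℝ} {F : ℕ → ℝ → ℝ}

theorem contDiffOn_of_hasDerivWithinAt_succ (hs : UniqueDiffOn ℝ s) (h0 : ContinuousOn (F 0) s)
    (hF : ∀ k, ∀ x ∈ s, HasDerivWithinAt (F (k + 1)) (F k x) s x) :
    ∀ m : ℕ, ContDiffOn ℝ m (F m) s
  | 0 => contDiffOn_zero.mpr h0
  | m + 1 => by
    rw [Nat.cast_succ, contDiffOn_succ_iff_derivWithin hs]
    refine ⟨fun x hx => (hF m x hx).differentiableWithinAt, by simp, ?_⟩
    exact (contDiffOn_of_hasDerivWithinAt_succ hs h0 hF m).congr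
      fun x hx => (hF m x hx).derivWithin (hs x hx)

theorem iteratedDerivWithin_eqOn_of_hasDerivWithinAt_succ (hs : UniqueDiffOn ℝ s)
    (hF : ∀ k, ∀ x ∈ s, HasDerivWithinAt (F (k + 1)) (F k x) s x) {i m : ℕ} (hi : i ≤ m) :
    EqOn (iteratedDerivWithin i (F m) s) (F (m - i)) s := by
  induction i with
  | zero => intro x _; simp
  | succ i ih =>
    intro x hx
    have hm : m - i = m - (i + 1) + 1 := by omega
    rw [iteratedDerivWithin_succ, derivWithin_congr (ih (by omega)) (ih (by omega) hx), hm]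
    exact (hF _ x hx).derivWithin (hs x hx)

end DerivativeChain

theorem conv_pow_zero (f : ℝ → ℝ) : conv (· ^ 0) f = fun t => ∫ τ in (0:ℝ)..t, f τ := by
  funext t
  simp only [conv, pow_zero, one_mul]

theorem hker_natCast_succ (m : ℕ) (x : ℝ) : hker ((m + 1 : ℕ) : ℝ) x = x ^ m / m ! := by
  rw [hker, Nat.cast_succ, add_sub_cancel_right, Real.rpow_natCast, Real.Gamma_nat_eq_factorial]

theorem conv_hker_natCast_succ (m : ℕ) (f : ℝ → ℝ) :
    conv (hker ((m + 1 : ℕ) : ℝ)) f = fun t => conv (· ^ m) f t / m ! := by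
  funext t
  simp only [conv, hker_natCast_succ, div_mul_eq_mul_div, intervalIntegral.integral_div]

namespace Cm1

variable {f : ℝ → ℝ}

theorem continuousOn_mul {g : ℝ → ℝ} (hg : ContinuousOn g (Ici 0)) (hf : Cm1 f) :
    Cm1 fun τ => g τ * f τ := by
  obtain ⟨q, hq, f₁, hf₁, hff⟩ := hf
  refine ⟨q, hq, fun τ => g τ * f₁ τ, hg.mul hf₁, fun t ht => ?_⟩
  simp only [hff t ht]
  ring

theorem id_mul (hf : Cm1 f) : Cm1 fun τ => τ * f τ :=
  hf.continuousOn_mul continuousOn_id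

theorem continuousOn_Ioi (hf : Cm1 f) : ContinuousOn f (Ioi 0) := by
  obtain ⟨q, -, f₁, hf₁, hff⟩ := hf
  refine ContinuousOn.congr (fun x hx => ?_) fun t ht => hff t ht
  exact ((Real.continuousAt_rpow_const x q (Or.inl (ne_of_gt hx))).continuousWithinAt).mul
    (hf₁.mono Ioi_subset_Ici_self x hx)

theorem intervalIntegrable (hf : Cm1 f) {t : ℝ} (ht : 0 ≤ t) :
    IntervalIntegrable f volume 0 t := by
  obtain ⟨q, hq, f₁, hf₁, hff⟩ := hf
  have hrpow : IntervalIntegrable (fun τ => τ ^ q * f₁ τ) volume 0 t :=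
    (intervalIntegrable_rpow' hq).mul_continuousOn
      (hf₁.mono (by rw [uIcc_of_le ht]; exact Icc_subset_Ici_self))
  rw [intervalIntegrable_iff_integrableOn_Ioc_of_le ht] at hrpow ⊢
  exact hrpow.congr_fun (fun τ hτ => (hff τ hτ.1).symm) measurableSet_Ioc

theorem continuousOn_primitive (hf : Cm1 f) :
    ContinuousOn (fun t => ∫ τ in (0:ℝ)..t, f τ) (Ici 0) := by
  intro t (ht : 0 ≤ t)
  have hIcc : ContinuousOn (fun t => ∫ τ in (0:ℝ)..t, f τ) (Icc 0 (t + 1)) := by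
    simpa [uIcc_of_le (by linarith : (0:ℝ) ≤ t + 1)] using
      continuousOn_primitive_interval' (hf.intervalIntegrable (by linarith : (0:ℝ) ≤ t + 1))
        left_mem_uIcc
  refine (hIcc t ⟨ht, by linarith⟩).mono_of_mem_nhdsWithin ?_
  rw [← Ici_inter_Iic]
  exact inter_mem self_mem_nhdsWithin (mem_nhdsWithin_of_mem_nhds (Iic_mem_nhds (lt_add_one t)))

theorem hasDerivAt_primitive (hf : Cm1 f) {t : ℝ} (ht : 0 < t) :
    HasDerivAt (fun t => ∫ τ in (0:ℝ)..t, f τ) (f t) t :=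
  integral_hasDerivAt_right (hf.intervalIntegrable ht.le)
    (hf.continuousOn_Ioi.stronglyMeasurableAtFilter isOpen_Ioi t ht)
    (hf.continuousOn_Ioi.continuousAt (Ioi_mem_nhds ht))

theorem conv_pow_succ (hf : Cm1 f) (m : ℕ) {t : ℝ} (ht : 0 ≤ t) :
    conv (· ^ (m + 1)) f t = t * conv (· ^ m) f t - conv (· ^ m) (fun τ => τ * f τ) t := by
  have hpow : ContinuousOn (fun τ : ℝ => (t - τ) ^ m) (Ici 0) := by fun_prop
  simp only [conv]
  rw [← intervalIntegral.integral_const_mul, ← integral_sub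
    (((hf.continuousOn_mul hpow).intervalIntegrable ht).const_mul t)
    ((hf.id_mul.continuousOn_mul hpow).intervalIntegrable ht)]
  congr 1 with τ
  ring

theorem continuousOn_conv_pow (hf : Cm1 f) (m : ℕ) : ContinuousOn (conv (· ^ m) f) (Ici 0) := by
  induction m generalizing f with
  | zero => simpa only [conv_pow_zero] using hf.continuousOn_primitive
  | succ m ih =>
    exact ((continuousOn_id.mul (ih hf)).sub (ih hf.id_mul)).congr fun t ht =>
      hf.conv_pow_succ m ht

theorem hasDerivAt_conv_pow_zero (hf : Cm1 f) {t : ℝ} (ht : 0 < t) :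
    HasDerivAt (conv (· ^ 0) f) (f t) t := by
  simpa only [conv_pow_zero] using hf.hasDerivAt_primitive ht

theorem hasDerivAt_conv_pow_succ_of_hasDerivAt (hf : Cm1 f) (m : ℕ) {t a b : ℝ} (ht : 0 < t)
    (ha : HasDerivAt (conv (· ^ m) f) a t)
    (hb : HasDerivAt (conv (· ^ m) fun τ => τ * f τ) b t) :
    HasDerivAt (conv (· ^ (m + 1)) f) (conv (· ^ m) f t + t * a - b) t := by
  have hrec : (fun s => s * conv (· ^ m) f s - conv (· ^ m) (fun τ => τ * f τ) s)
      =ᶠ[𝓝 t] conv (· ^ (m + 1)) f :=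
    eventually_of_mem (Ioi_mem_nhds ht) fun s hs => (hf.conv_pow_succ m (le_of_lt hs)).symm
  simpa using (((hasDerivAt_id t).mul ha).sub hb).congr_of_eventuallyEq hrec.symm

theorem hasDerivAt_conv_pow_succ (hf : Cm1 f) (m : ℕ) {t : ℝ} (ht : 0 < t) :
    HasDerivAt (conv (· ^ (m + 1)) f) ((m + 1) * conv (· ^ m) f t) t := by
  induction m generalizing f with
  | zero =>
    simpa using hf.hasDerivAt_conv_pow_succ_of_hasDerivAt 0 ht (hf.hasDerivAt_conv_pow_zero ht)
      (hf.id_mul.hasDerivAt_conv_pow_zero ht)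
  | succ m ih =>
    convert hf.hasDerivAt_conv_pow_succ_of_hasDerivAt (m + 1) ht (ih hf)
      (ih hf.id_mul) using 1
    rw [hf.conv_pow_succ m ht.le]
    push_cast
    ring


theorem continuousOn_conv_hker (hf : Cm1 f) (m : ℕ) :
    ContinuousOn (conv (hker ((m + 1 : ℕ) : ℝ)) f) (Ici 0) := by
  rw [conv_hker_natCast_succ]
  exact (hf.continuousOn_conv_pow m).div_const _

theorem hasDerivAt_conv_hker (hf : Cm1 f) (m : ℕ) {t : ℝ} (ht : 0 < t) :
    HasDerivAt (conv (hker ((m + 1 + 1 : ℕ) : ℝ)) f) (conv (hker ((m + 1 : ℕ) : ℝ)) f t) t := by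
  rw [conv_hker_natCast_succ, conv_hker_natCast_succ]
  refine ((hf.hasDerivAt_conv_pow_succ m ht).div_const ((m + 1)! : ℝ)).congr_deriv ?_
  rw [Nat.factorial_succ, Nat.cast_mul, Nat.cast_succ, mul_div_mul_left _ _ (by positivity)]

end Cm1

/-- for `f ∈ C_{-1}(0,∞)`, the function
`g = h_n * f = {1}^{<n>} * f` is `(n-1)`-times continuously differentiable on
`[0,∞)` and `g(0) = g'(0) = ⋯ = g^{(n-1)}(0) = 0`. -/
theorem hn_conv_smoothness (n : ℕ) (hn : 0 < n) (f : ℝ → ℝ) (hf : Cm1 f) :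
    ContDiffOn ℝ (n - 1 : ℕ) (conv (hker n) f) (Set.Ici 0) ∧
      ∀ i : ℕ, i ≤ n - 1 →
        iteratedDerivWithin i (conv (hker n) f) (Set.Ici 0) 0 = 0 := by
  obtain ⟨m, rfl⟩ : ∃ m, n = m + 1 := ⟨n - 1, by omega⟩
  set F : ℕ → ℝ → ℝ := fun k => conv (hker ((k + 1 : ℕ) : ℝ)) f
  have hF : ∀ k, ∀ x ∈ Ici (0:ℝ), HasDerivWithinAt (F (k + 1)) (F k x) (Ici 0) x :=
    fun k _ hx => hasDerivWithinAt_Ici_of_hasDerivAt_Ioi (hf.continuousOn_conv_hker (k + 1))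
      (hf.continuousOn_conv_hker k) (fun _ hy => hf.hasDerivAt_conv_hker k hy) hx
  rw [Nat.add_sub_cancel]
  refine ⟨contDiffOn_of_hasDerivWithinAt_succ (uniqueDiffOn_Ici 0)
    (hf.continuousOn_conv_hker 0) hF m, fun i hi => ?_⟩
  rw [iteratedDerivWithin_eqOn_of_hasDerivWithinAt_succ (uniqueDiffOn_Ici 0) hF hi self_mem_Ici]
  exact integral_same
end
end
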